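/- Any standard one-dimensional screening problem has a solution: there exists a measurable IC and IR mechanism (x*, t*) with bounded transfer t* whose principal payoff ∫_Θ (v(x*(θ), θ) + t*(θ)) dμ is greater than or equal to the principal's payoff of every measurable IC and IR mechanism (x, t) with μ-integrable transfer. -/

import Mathlib

/-!
Incentive compatibility forces the allocation to be monotone (strict increasing differences)
and the rent `u (x a) a - t a` to be monotone (utility nondecreasing in the type). Raising every
transfer by the infimum of the rents keeps IC and IR, weakly raises the principal's payoff and
bounds the transfers uniformly, so it suffices to maximise over mechanisms with uniformly bounded
transfers. Along a maximising sequence, Helly's selection theorem gives a subsequence whose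
allocations and rents converge pointwise on `Θ`; the transfers then converge too, IC and IR pass
to the limit by continuity of `u`, and dominated convergence shows that the limit mechanism
attains the supremum.
-/

open MeasureTheory Set

noncomputable section

/-- A measurable IC and IR mechanism in the standard one-dimensional screening
problem. -/
def ICIRMech (Θ X : Set ℝ) (u : ℝ → ℝ → ℝ) (x t : ℝ → ℝ) : Prop :=
  Measurable x ∧ Measurable t ∧
    (∀ a ∈ Θ, x a ∈ X) ∧
    (∀ a ∈ Θ, ∀ a' ∈ Θ, u (x a) a - t a ≥ u (x a') a - t a') ∧
    (∀ a ∈ Θ, u (x a) a - t a ≥ 0)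

/-- The principal's expected payoff. -/
def PPayoff (v : ℝ → ℝ → ℝ) (μ : Measure ℝ) (x t : ℝ → ℝ) : ℝ :=
  ∫ a, (v (x a) a + t a) ∂μ

open Filter Topology

theorem exists_subseq_tendsto_of_countable {α : Type*} {s : Set α} (hs : s.Countable) {A B : ℝ}
    (f : ℕ → α → ℝ) (hf : ∀ n, ∀ a ∈ s, f n a ∈ Icc A B) :
    ∃ φ : ℕ → ℕ, StrictMono φ ∧ ∃ g : α → ℝ,
      ∀ a ∈ s, Tendsto (fun k => f (φ k) a) atTop (𝓝 (g a)) := by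
  have : Countable s := hs.to_subtype
  obtain ⟨G, -, φ, hφ, hG⟩ := isCompact_univ.tendsto_subseq
    (x := fun n (a : s) => (⟨f n a, hf n a a.2⟩ : Icc A B)) fun n => mem_univ _
  classical
  refine ⟨φ, hφ, fun a => if h : a ∈ s then G ⟨a, h⟩ else 0, fun a ha => ?_⟩
  simpa [ha, Function.comp_def] using
    (continuous_subtype_val.tendsto _).comp (tendsto_pi_nhds.1 hG ⟨a, ha⟩)

theorem tendsto_of_tendsto_rat_of_continuousAt {ι : Type*} {l : Filter ι} {f : ι → ℝ → ℝ}
    (hf : ∀ i, Monotone (f i)) {g : ℝ → ℝ}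
    (hg : ∀ q : ℚ, Tendsto (fun i => f i q) l (𝓝 (g q))) {a : ℝ} (ha : ContinuousAt g a) :
    Tendsto (fun i => f i a) l (𝓝 (g a)) := by
  refine tendsto_order.2 ⟨fun c hc => ?_, fun c hc => ?_⟩
  · obtain ⟨b, hba, hb⟩ := exists_Ioc_subset_of_mem_nhds (ha.eventually (lt_mem_nhds hc))
      (exists_lt a)
    obtain ⟨q, hbq, hqa⟩ := exists_rat_btwn hba
    filter_upwards [(tendsto_order.1 (hg q)).1 c (hb ⟨hbq, hqa.le⟩)] with i hi
      using hi.trans_le (hf i hqa.le)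
  · obtain ⟨b, hab, hb⟩ := exists_Ico_subset_of_mem_nhds (ha.eventually (gt_mem_nhds hc))
      (exists_gt a)
    obtain ⟨q, haq, hqb⟩ := exists_rat_btwn hab
    filter_upwards [(tendsto_order.1 (hg q)).2 c (hb ⟨haq.le, hqb⟩)] with i hi
      using (hf i haq.le).trans_lt hi

/-- Helly's selection theorem. -/
theorem exists_subseq_tendsto_of_monotone {A B : ℝ} (f : ℕ → ℝ → ℝ) (hf : ∀ n, Monotone (f n))
    (hfAB : ∀ n a, f n a ∈ Icc A B) :
    ∃ φ : ℕ → ℕ, StrictMono φ ∧ ∃ g : ℝ → ℝ, Monotone g ∧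
      ∀ a, Tendsto (fun k => f (φ k) a) atTop (𝓝 (g a)) := by
  obtain ⟨φ₁, hφ₁, L, hL⟩ := exists_subseq_tendsto_of_countable (countable_range ((↑) : ℚ → ℝ))
    f fun n a _ => hfAB n a
  have hLmono : MonotoneOn L (range ((↑) : ℚ → ℝ)) := fun a ha b hb hab =>
    le_of_tendsto_of_tendsto' (hL a ha) (hL b hb) fun k => hf _ hab
  have hLAB : L '' range ((↑) : ℚ → ℝ) ⊆ Icc A B := by
    rintro _ ⟨a, ha, rfl⟩
    exact isClosed_Icc.mem_of_tendsto (hL a ha) (Eventually.of_forall fun k => hfAB _ a)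
  -- `G` interpolates the limit on the rationals; off its countably many jumps the whole
  -- sequence converges, and a second extraction handles the jumps.
  obtain ⟨G, hG, hGL⟩ := hLmono.exists_monotone_extension (bddBelow_Icc.mono hLAB)
    (bddAbove_Icc.mono hLAB)
  obtain ⟨φ₂, hφ₂, L', hL'⟩ := exists_subseq_tendsto_of_countable hG.countable_not_continuousAt
    (fun k => f (φ₁ k)) fun k a _ => hfAB _ a
  have hconv : ∀ a, ∃ l, Tendsto (fun k => f (φ₁ (φ₂ k)) a) atTop (𝓝 l) := by
    intro a
    by_cases ha : ContinuousAt G a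
    · refine ⟨G a, (tendsto_of_tendsto_rat_of_continuousAt (fun k => hf _) (fun q => ?_) ha).comp
        hφ₂.tendsto_atTop⟩
      rw [← hGL ⟨q, rfl⟩]
      exact hL q ⟨q, rfl⟩
    · exact ⟨L' a, hL' a ha⟩
  choose g hg using hconv
  exact ⟨φ₁ ∘ φ₂, hφ₁.comp hφ₂, g,
    fun a b hab => le_of_tendsto_of_tendsto' (hg a) (hg b) fun k => hf _ hab, hg⟩

theorem exists_subseq_tendsto_of_monotoneOn {s : Set ℝ} {A B : ℝ} (f : ℕ → ℝ → ℝ)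
    (hf : ∀ n, MonotoneOn (f n) s) (hfAB : ∀ n, ∀ a ∈ s, f n a ∈ Icc A B) :
    ∃ φ : ℕ → ℕ, StrictMono φ ∧ ∃ g : ℝ → ℝ, Monotone g ∧
      ∀ a ∈ s, Tendsto (fun k => f (φ k) a) atTop (𝓝 (g a)) := by
  have hbdd : ∀ n, f n '' s ⊆ Icc A B := fun n => image_subset_iff.2 (hfAB n)
  choose F hF hFf using fun n =>
    (hf n).exists_monotone_extension (bddBelow_Icc.mono (hbdd n)) (bddAbove_Icc.mono (hbdd n))
  obtain ⟨φ, hφ, g, hg, hFg⟩ := exists_subseq_tendsto_of_monotone (A := A) (B := max A B)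
    (fun n a => max A (min B (F n a)))
    (fun n a b hab => max_le_max le_rfl (min_le_min le_rfl (hF n hab)))
    fun n a => ⟨le_max_left _ _, max_le_max le_rfl (min_le_left _ _)⟩
  refine ⟨φ, hφ, g, hg, fun a ha => (hFg a).congr fun k => ?_⟩
  rw [← hFf _ ha, min_eq_right (hfAB _ a ha).2, max_eq_right (hfAB _ a ha).1]

theorem ContinuousOn.aestronglyMeasurable_comp {α β : Type*} [MeasurableSpace α]
    [TopologicalSpace β] [MeasurableSpace β] [OpensMeasurableSpace β] {μ : Measure α}
    {f : β → ℝ} {S : Set β} (hf : ContinuousOn f S) (hS : MeasurableSet S) {g : α → β}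
    (hg : Measurable g) (hgS : ∀ᵐ a ∂μ, g a ∈ S) : AEStronglyMeasurable (fun a => f (g a)) μ := by
  classical
  refine ((hf.measurable_piecewise (continuousOn_const (c := 0)) hS).comp
    hg).aestronglyMeasurable.congr ?_
  filter_upwards [hgS] with a ha using piecewise_eq_of_mem _ _ _ ha

theorem ContinuousOn.integrable_comp {α β : Type*} [MeasurableSpace α]
    [TopologicalSpace β] [T2Space β] [MeasurableSpace β] [OpensMeasurableSpace β]
    {μ : Measure α} [IsFiniteMeasure μ] {f : β → ℝ} {S : Set β} (hf : ContinuousOn f S)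
    (hS : IsCompact S) {g : α → β} (hg : Measurable g) (hgS : ∀ᵐ a ∂μ, g a ∈ S) :
    Integrable (fun a => f (g a)) μ := by
  obtain ⟨C, hC⟩ := hS.exists_bound_of_continuousOn hf
  exact .of_bound (hf.aestronglyMeasurable_comp hS.isClosed.measurableSet hg hgS) C
    (by filter_upwards [hgS] with a ha using hC _ ha)

theorem measurable_indicator_of_tendsto {α : Type*} [MeasurableSpace α] {s : Set α}
    (hs : MeasurableSet s) {f : ℕ → α → ℝ} (hf : ∀ n, Measurable (f n)) {g : α → ℝ}
    (hfg : ∀ a ∈ s, Tendsto (fun n => f n a) atTop (𝓝 (g a))) : Measurable (s.indicator g) := by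
  refine measurable_of_tendsto_metrizable (fun n => (hf n).indicator hs)
    (tendsto_pi_nhds.2 fun a => ?_)
  by_cases ha : a ∈ s
  · simpa [ha] using hfg a ha
  · simp [ha]

theorem ContinuousOn.tendsto_comp_prodMk {ι α β γ : Type*} [TopologicalSpace α]
    [TopologicalSpace β] [TopologicalSpace γ] {l : Filter ι} {X : Set α} {Θ : Set β}
    {f : α → β → γ} (hf : ContinuousOn (fun p : α × β => f p.1 p.2) (X ×ˢ Θ)) {y : ι → α}
    {b : α} {a : β} (hy : ∀ i, y i ∈ X) (hb : b ∈ X) (ha : a ∈ Θ) (hyb : Tendsto y l (𝓝 b)) :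
    Tendsto (fun i => f (y i) a) l (𝓝 (f b a)) :=
  (hf (b, a) ⟨hb, ha⟩).tendsto.comp <| tendsto_nhdsWithin_iff.2
    ⟨hyb.prodMk_nhds tendsto_const_nhds, Eventually.of_forall fun i => ⟨hy i, ha⟩⟩

theorem exists_abs_le_of_continuousOn_prod {α β : Type*} [TopologicalSpace α]
    [TopologicalSpace β] {X : Set α} {Θ : Set β} {f : α → β → ℝ} (hX : IsCompact X)
    (hΘ : IsCompact Θ) (hf : ContinuousOn (fun p : α × β => f p.1 p.2) (X ×ˢ Θ)) :
    ∃ C, ∀ y ∈ X, ∀ a ∈ Θ, |f y a| ≤ C :=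
  let ⟨C, hC⟩ := (hX.prod hΘ).exists_bound_of_continuousOn hf
  ⟨C, fun y hy a ha => hC (y, a) ⟨hy, ha⟩⟩

section Screening

variable {Θ X : Set ℝ} {u v : ℝ → ℝ → ℝ} {μ : Measure ℝ} {x t : ℝ → ℝ}

theorem ICIRMech.monotoneOn_alloc
    (hSID : ∀ x ∈ X, ∀ x' ∈ X, x < x' → ∀ a ∈ Θ, ∀ a' ∈ Θ, a < a' →
      u x' a - u x a < u x' a' - u x a')
    (h : ICIRMech Θ X u x t) : MonotoneOn x Θ := by
  obtain ⟨-, -, hxX, hIC, -⟩ := h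
  intro a ha a' ha' haa'
  by_contra! hx
  have hlt : a < a' := haa'.lt_of_ne (by rintro rfl; exact lt_irrefl _ hx)
  have := hSID _ (hxX a' ha') _ (hxX a ha) hx a ha a' ha' hlt
  linarith [hIC a ha a' ha', hIC a' ha' a ha]

theorem ICIRMech.monotoneOn_rent
    (humono : ∀ x ∈ X, ∀ a ∈ Θ, ∀ a' ∈ Θ, a ≤ a' → u x a ≤ u x a')
    (h : ICIRMech Θ X u x t) : MonotoneOn (fun a => u (x a) a - t a) Θ := by
  obtain ⟨-, -, hxX, hIC, -⟩ := h
  intro a ha a' ha' haa'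
  linarith [hIC a' ha' a ha, humono _ (hxX a ha) a ha a' ha' haa']

/-- The constant is the infimum of the rents; the lower bound on the new transfers is IC against
a type whose rent is within `1` of that infimum. -/
theorem ICIRMech.exists_add_const_abs_le {C : ℝ} (hΘ : Θ.Nonempty)
    (hu : ∀ y ∈ X, ∀ a ∈ Θ, |u y a| ≤ C) (h : ICIRMech Θ X u x t) :
    ∃ c, 0 ≤ c ∧ ICIRMech Θ X u x (fun a => t a + c) ∧ ∀ a ∈ Θ, |t a + c| ≤ C + 1 := by
  obtain ⟨hx, ht, hxX, hIC, hIR⟩ := h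
  set U := fun a => u (x a) a - t a
  have hUbdd : BddBelow (U '' Θ) := ⟨0, by rintro _ ⟨a, ha, rfl⟩; exact hIR a ha⟩
  have hcU : ∀ a ∈ Θ, sInf (U '' Θ) ≤ U a := fun a ha => csInf_le hUbdd ⟨a, ha, rfl⟩
  obtain ⟨_, ⟨a₀, ha₀, rfl⟩, hU₀⟩ :=
    exists_lt_of_csInf_lt (hΘ.image U) (lt_add_one (sInf (U '' Θ)))
  refine ⟨sInf (U '' Θ), le_csInf (hΘ.image U) (by rintro _ ⟨a, ha, rfl⟩; exact hIR a ha),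
    ⟨hx, ht.add_const _, hxX, fun a ha a' ha' => by linarith [hIC a ha a' ha'],
      fun a ha => by linarith [hcU a ha]⟩, fun a ha => abs_le.2 ⟨?_, ?_⟩⟩
  · linarith [hIC a₀ ha₀ a ha, abs_le.1 (hu _ (hxX a ha) a₀ ha₀)]
  · linarith [hcU a ha, abs_le.1 (hu _ (hxX a ha) a ha)]

theorem ICIRMech.of_tendsto (huc : ContinuousOn (fun p : ℝ × ℝ => u p.1 p.2) (X ×ˢ Θ))
    {xs ts : ℕ → ℝ → ℝ} (h : ∀ n, ICIRMech Θ X u (xs n) (ts n)) (hx : Measurable x)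
    (ht : Measurable t) (hxX : ∀ a ∈ Θ, x a ∈ X)
    (hxs : ∀ a ∈ Θ, Tendsto (fun n => xs n a) atTop (𝓝 (x a)))
    (hts : ∀ a ∈ Θ, Tendsto (fun n => ts n a) atTop (𝓝 (t a))) : ICIRMech Θ X u x t := by
  have hU : ∀ a ∈ Θ, ∀ a' ∈ Θ,
      Tendsto (fun n => u (xs n a') a - ts n a') atTop (𝓝 (u (x a') a - t a')) :=
    fun a ha a' ha' => (huc.tendsto_comp_prodMk (fun n => (h n).2.2.1 a' ha') (hxX a' ha') ha
      (hxs a' ha')).sub (hts a' ha')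
  exact ⟨hx, ht, hxX,
    fun a ha a' ha' => le_of_tendsto_of_tendsto' (hU a ha a' ha') (hU a ha a ha)
      fun n => (h n).2.2.2.1 a ha a' ha',
    fun a ha => ge_of_tendsto' (hU a ha a ha) fun n => (h n).2.2.2.2 a ha⟩

theorem pPayoff_add_const [IsProbabilityMeasure μ]
    (h : Integrable (fun a => v (x a) a + t a) μ) (c : ℝ) :
    PPayoff v μ x (fun a => t a + c) = PPayoff v μ x t + c := by
  simp only [PPayoff, ← add_assoc]
  rw [integral_add h (integrable_const c), integral_const, probReal_univ, one_smul]

theorem pPayoff_le [IsProbabilityMeasure μ] {C : ℝ} (h : ∀ᵐ a ∂μ, |v (x a) a + t a| ≤ C) :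
    PPayoff v μ x t ≤ C := by
  have := norm_integral_le_of_norm_le_const (f := fun a => v (x a) a + t a) h
  rw [probReal_univ, mul_one, Real.norm_eq_abs] at this
  exact (le_abs_self _).trans this

theorem ICIRMech.exists_bounded_pPayoff_le [IsProbabilityMeasure μ] (hX : IsCompact X)
    (hΘ : IsCompact Θ) (hvc : ContinuousOn (fun p : ℝ × ℝ => v p.1 p.2) (X ×ˢ Θ))
    (hae : ∀ᵐ a ∂μ, a ∈ Θ) {C : ℝ} (hu : ∀ y ∈ X, ∀ a ∈ Θ, |u y a| ≤ C)
    (h : ICIRMech Θ X u x t) (ht : Integrable t μ) :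
    ∃ t', ICIRMech Θ X u x t' ∧ (∀ a ∈ Θ, |t' a| ≤ C + 1) ∧
      PPayoff v μ x t ≤ PPayoff v μ x t' := by
  obtain ⟨c, hc, h', hc'⟩ := h.exists_add_const_abs_le hae.exists hu
  have hint : Integrable (fun a => v (x a) a + t a) μ :=
    (hvc.integrable_comp (hX.prod hΘ) (h.1.prodMk measurable_id)
      (by filter_upwards [hae] with a ha using ⟨h.2.2.1 a ha, ha⟩)).add ht
  exact ⟨_, h', hc', by rw [pPayoff_add_const hint]; linarith⟩

theorem tendsto_pPayoff [IsFiniteMeasure μ]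
    (hvc : ContinuousOn (fun p : ℝ × ℝ => v p.1 p.2) (X ×ˢ Θ)) (hXΘ : MeasurableSet (X ×ˢ Θ))
    {C K : ℝ} (hv : ∀ y ∈ X, ∀ a ∈ Θ, |v y a| ≤ C) (hae : ∀ᵐ a ∂μ, a ∈ Θ)
    {xs ts : ℕ → ℝ → ℝ} (hxs : ∀ n, Measurable (xs n)) (hts : ∀ n, Measurable (ts n))
    (hxsX : ∀ n, ∀ a ∈ Θ, xs n a ∈ X) (htsK : ∀ n, ∀ a ∈ Θ, |ts n a| ≤ K)
    (hxX : ∀ a ∈ Θ, x a ∈ X) (hxlim : ∀ a ∈ Θ, Tendsto (fun n => xs n a) atTop (𝓝 (x a)))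
    (htlim : ∀ a ∈ Θ, Tendsto (fun n => ts n a) atTop (𝓝 (t a))) :
    Tendsto (fun n => PPayoff v μ (xs n) (ts n)) atTop (𝓝 (PPayoff v μ x t)) :=
  tendsto_integral_of_dominated_convergence (fun _ => C + K)
    (fun n => (hvc.aestronglyMeasurable_comp hXΘ ((hxs n).prodMk measurable_id)
      (by filter_upwards [hae] with a ha using ⟨hxsX n a ha, ha⟩)).add
        (hts n).aestronglyMeasurable)
    (integrable_const _)
    (fun n => by
      filter_upwards [hae] with a ha
      using (abs_add_le _ _).trans (add_le_add (hv _ (hxsX n a ha) a ha) (htsK n a ha)))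
    (by
      filter_upwards [hae] with a ha
      using (hvc.tendsto_comp_prodMk (hxsX · a ha) (hxX a ha) ha (hxlim a ha)).add (htlim a ha))

/-- Helly's theorem is applied to the allocations and to the rents, both monotone; the transfers
then converge as utility minus rent. -/
theorem exists_subseq_tendsto_ICIRMech (hX : IsCompact X) (hΘ : IsCompact Θ)
    (huc : ContinuousOn (fun p : ℝ × ℝ => u p.1 p.2) (X ×ˢ Θ))
    (hSID : ∀ x ∈ X, ∀ x' ∈ X, x < x' → ∀ a ∈ Θ, ∀ a' ∈ Θ, a < a' →
      u x' a - u x a < u x' a' - u x a')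
    (humono : ∀ x ∈ X, ∀ a ∈ Θ, ∀ a' ∈ Θ, a ≤ a' → u x a ≤ u x a')
    {K : ℝ} (hK : 0 ≤ K) {xs ts : ℕ → ℝ → ℝ} (h : ∀ n, ICIRMech Θ X u (xs n) (ts n))
    (htsK : ∀ n, ∀ a ∈ Θ, |ts n a| ≤ K) :
    ∃ φ : ℕ → ℕ, StrictMono φ ∧ ∃ x t, ICIRMech Θ X u x t ∧ (∀ a, |t a| ≤ K) ∧
      ∀ a ∈ Θ, Tendsto (fun k => xs (φ k) a) atTop (𝓝 (x a)) ∧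
        Tendsto (fun k => ts (φ k) a) atTop (𝓝 (t a)) := by
  obtain ⟨C, hu⟩ := exists_abs_le_of_continuousOn_prod hX hΘ huc
  obtain ⟨φ₁, hφ₁, x, hx, hxs⟩ := exists_subseq_tendsto_of_monotoneOn xs
    (fun n => (h n).monotoneOn_alloc hSID)
    fun n a ha => hX.isBounded.subset_Icc_sInf_sSup ((h n).2.2.1 a ha)
  obtain ⟨φ₂, hφ₂, W, -, hW⟩ := exists_subseq_tendsto_of_monotoneOn
    (fun k a => u (xs (φ₁ k) a) a - ts (φ₁ k) a) (fun k => (h _).monotoneOn_rent humono)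
    (A := -(C + K)) (B := C + K) fun k a ha => by
      have := abs_le.1 (hu _ ((h (φ₁ k)).2.2.1 a ha) a ha)
      have := abs_le.1 (htsK (φ₁ k) a ha)
      constructor <;> linarith
  have hxσ : ∀ a ∈ Θ, Tendsto (fun k => xs (φ₁ (φ₂ k)) a) atTop (𝓝 (x a)) :=
    fun a ha => (hxs a ha).comp hφ₂.tendsto_atTop
  have hxX : ∀ a ∈ Θ, x a ∈ X := fun a ha => hX.isClosed.mem_of_tendsto (hxσ a ha)
    (Eventually.of_forall fun k => (h _).2.2.1 a ha)
  have htσ : ∀ a ∈ Θ, Tendsto (fun k => ts (φ₁ (φ₂ k)) a) atTop (𝓝 (u (x a) a - W a)) :=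
    fun a ha => ((huc.tendsto_comp_prodMk (fun k => (h _).2.2.1 a ha) (hxX a ha) ha
      (hxσ a ha)).sub (hW a ha)).congr fun k => sub_sub_cancel _ _
  have htσ' : ∀ a ∈ Θ, Tendsto (fun k => ts (φ₁ (φ₂ k)) a) atTop
      (𝓝 (Θ.indicator (fun a => u (x a) a - W a) a)) := fun a ha => by
    rw [indicator_of_mem ha]
    exact htσ a ha
  refine ⟨φ₁ ∘ φ₂, hφ₁.comp hφ₂, x, _,
    ICIRMech.of_tendsto huc (fun k => h _) hx.measurable
      (measurable_indicator_of_tendsto hΘ.isClosed.measurableSet (fun k => (h _).2.1) htσ)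
      hxX hxσ htσ',
    fun a => ?_, fun a ha => ⟨hxσ a ha, htσ' a ha⟩⟩
  by_cases ha : a ∈ Θ
  · exact le_of_tendsto' (htσ' a ha).abs fun k => htsK _ a ha
  · simp [ha, hK]

theorem exists_forall_pPayoff_le [IsProbabilityMeasure μ] (hX : IsCompact X) (hΘ : IsCompact Θ)
    (hae : ∀ᵐ a ∂μ, a ∈ Θ) (huc : ContinuousOn (fun p : ℝ × ℝ => u p.1 p.2) (X ×ˢ Θ))
    (hvc : ContinuousOn (fun p : ℝ × ℝ => v p.1 p.2) (X ×ˢ Θ))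
    (hSID : ∀ x ∈ X, ∀ x' ∈ X, x < x' → ∀ a ∈ Θ, ∀ a' ∈ Θ, a < a' →
      u x' a - u x a < u x' a' - u x a')
    (humono : ∀ x ∈ X, ∀ a ∈ Θ, ∀ a' ∈ Θ, a ≤ a' → u x a ≤ u x a') {K : ℝ}
    (hfeas : ∃ x t, ICIRMech Θ X u x t ∧ ∀ a ∈ Θ, |t a| ≤ K) :
    ∃ x t, ICIRMech Θ X u x t ∧ (∀ a, |t a| ≤ K) ∧ ∀ x' t', ICIRMech Θ X u x' t' →
      (∀ a ∈ Θ, |t' a| ≤ K) → PPayoff v μ x' t' ≤ PPayoff v μ x t := by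
  obtain ⟨C, hv⟩ := exists_abs_le_of_continuousOn_prod hX hΘ hvc
  obtain ⟨x₀, t₀, h₀, ht₀⟩ := hfeas
  have hK : 0 ≤ K := by
    obtain ⟨a, ha⟩ := hae.exists
    exact (abs_nonneg _).trans (ht₀ a ha)
  set P := {p | ∃ x t, ICIRMech Θ X u x t ∧ (∀ a ∈ Θ, |t a| ≤ K) ∧ PPayoff v μ x t = p}
  have hPbdd : BddAbove P := ⟨C + K, by
    rintro _ ⟨x, t, h, ht, rfl⟩
    exact pPayoff_le <| by
      filter_upwards [hae] with a ha
      using (abs_add_le _ _).trans (add_le_add (hv _ (h.2.2.1 a ha) a ha) (ht a ha))⟩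
  obtain ⟨p, -, hp, hpP⟩ := exists_seq_tendsto_sSup (S := P) ⟨_, x₀, t₀, h₀, ht₀, rfl⟩ hPbdd
  choose xs ts h htsK hpay using hpP
  obtain ⟨φ, hφ, x, t, hxt, htK, hlim⟩ :=
    exists_subseq_tendsto_ICIRMech hX hΘ huc hSID humono hK h htsK
  have hsup : PPayoff v μ x t = sSup P := tendsto_nhds_unique
    (tendsto_pPayoff hvc (hX.prod hΘ).isClosed.measurableSet hv hae (fun k => (h (φ k)).1)
      (fun k => (h (φ k)).2.1) (fun k => (h (φ k)).2.2.1) (fun k => htsK (φ k)) hxt.2.2.1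
      (fun a ha => (hlim a ha).1) fun a ha => (hlim a ha).2)
    ((hp.comp hφ.tendsto_atTop).congr fun k => (hpay (φ k)).symm)
  exact ⟨x, t, hxt, htK, fun x' t' h' ht' => hsup ▸ le_csSup hPbdd ⟨x', t', h', ht', rfl⟩⟩

end Screening

theorem stmt11
    (Θ X : Set ℝ) (hΘ : IsCompact Θ) (hX : IsCompact X) (hXne : X.Nonempty)
    (μ : Measure ℝ) (hμp : IsProbabilityMeasure μ) (hμsupp : μ Θᶜ = 0)
    (u v : ℝ → ℝ → ℝ)
    (huc : ContinuousOn (fun p : ℝ × ℝ => u p.1 p.2) (X ×ˢ Θ))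
    (hvc : ContinuousOn (fun p : ℝ × ℝ => v p.1 p.2) (X ×ˢ Θ))
    (humono : ∀ x ∈ X, ∀ a ∈ Θ, ∀ a' ∈ Θ, a ≤ a' → u x a ≤ u x a')
    (hSID : ∀ x ∈ X, ∀ x' ∈ X, x < x' → ∀ a ∈ Θ, ∀ a' ∈ Θ, a < a' →
      u x' a - u x a < u x' a' - u x a') :
    ∃ x t : ℝ → ℝ, ICIRMech Θ X u x t ∧ (∃ K : ℝ, ∀ a, |t a| ≤ K) ∧
      ∀ x' t' : ℝ → ℝ, ICIRMech Θ X u x' t' → Integrable t' μ →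
        PPayoff v μ x' t' ≤ PPayoff v μ x t := by
  have hae : ∀ᵐ a ∂μ, a ∈ Θ := mem_ae_iff.2 hμsupp
  obtain ⟨C, hu⟩ := exists_abs_le_of_continuousOn_prod hX hΘ huc
  obtain ⟨x₀, hx₀⟩ := hXne
  have h₀ : ICIRMech Θ X u (fun _ => x₀) (fun _ => -C) :=
    ⟨measurable_const, measurable_const, fun _ _ => hx₀, fun _ _ _ _ => le_rfl,
      fun a ha => by linarith [abs_le.1 (hu x₀ hx₀ a ha)]⟩
  obtain ⟨t₀, h₀', ht₀, -⟩ :=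
    h₀.exists_bounded_pPayoff_le (v := v) hX hΘ hvc hae hu (integrable_const _)
  obtain ⟨x, t, h, htK, hmax⟩ :=
    exists_forall_pPayoff_le (v := v) hX hΘ hae huc hvc hSID humono ⟨_, t₀, h₀', ht₀⟩
  refine ⟨x, t, h, ⟨_, htK⟩, fun x' t' h' ht' => ?_⟩
  obtain ⟨t'', h'', ht'', hle⟩ := h'.exists_bounded_pPayoff_le hX hΘ hvc hae hu ht'
  exact hle.trans (hmax _ _ h'' ht'')
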